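/- For positive integers k, l, p and nonnegative integers m, n: z_k z_p^m * z_l z_p^n = Σ_{i=1}^{m} z_k (z_p^i z_l + z_p^{i-1} z_{p+l}) (z_p^{m-i} * z_p^n) + Σ_{i=1}^{n} z_l (z_p^i z_k + z_p^{i-1} z_{p+k}) (z_p^{n-i} * z_p^m) + (z_k z_l + z_l z_k + z_{k+l}) (z_p^m * z_p^n). -/

import Mathlib

/-!
The stuffle recursion on the leading letters `z_k`, `z_l` gives
`z_k (z_p^m * z_l z_p^n) + z_l (z_k z_p^m * z_p^n) + z_{k+l} (z_p^m * z_p^n)`, and the middle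
term is the mirror image of the first by commutativity of `*`. The first is expanded by induction
on `m`: peeling off the leading `z_p` multiplies the `i`-th summand by `z_p`, turning it into the
`(i+1)`-st, while `z_p z_l (z_p^m * z_p^n) + z_{p+l} (z_p^m * z_p^n)` is the summand `i = 1`.
-/

open MonoidAlgebra Finset

abbrev H : Type := MonoidAlgebra ℚ (FreeMonoid ℕ+)

noncomputable def word (w : List ℕ+) : H := MonoidAlgebra.single (FreeMonoid.ofList w) 1

noncomputable def z (k : ℕ+) : H := word [k]

noncomputable def st : List ℕ+ → List ℕ+ → H
  | [], w => word w
  | k :: w1, [] => word (k :: w1)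
  | k :: w1, l :: w2 =>
      z k * st w1 (l :: w2) + z l * st (k :: w1) w2 + z (k + l) * st w1 w2
termination_by a b => a.length + b.length
decreasing_by all_goals (simp; try omega)

lemma word_nil : word [] = 1 := rfl

lemma word_cons (a : ℕ+) (w : List ℕ+) : word (a :: w) = z a * word w := by
  simp [word, z, MonoidAlgebra.single_mul_single]

lemma st_nil_left (w : List ℕ+) : st [] w = word w := by rw [st]

lemma st_nil_right (w : List ℕ+) : st w [] = word w := by cases w <;> rw [st]

lemma st_cons_cons (k l : ℕ+) (w₁ w₂ : List ℕ+) : st (k :: w₁) (l :: w₂) =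
    z k * st w₁ (l :: w₂) + z l * st (k :: w₁) w₂ + z (k + l) * st w₁ w₂ := by
  rw [st]

lemma st_comm (w₁ w₂ : List ℕ+) : st w₁ w₂ = st w₂ w₁ := by
  induction w₁, w₂ using st.induct with
  | case1 w => rw [st_nil_left, st_nil_right]
  | case2 k w => rw [st_nil_left, st_nil_right]
  | case3 k w₁ l w₂ ih₁ ih₂ ih₃ =>
    rw [st_cons_cons, st_cons_cons, ih₁, ih₂, ih₃, add_comm k l]
    abel

lemma sum_Icc_one_succ {M : Type*} [AddCommMonoid M] (f : ℕ → M) (m : ℕ) :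
    ∑ i ∈ Icc 1 (m + 1), f i = f 1 + ∑ i ∈ Icc 1 m, f (i + 1) := by
  induction m with
  | zero => simp
  | succ m ih => rw [sum_Icc_succ_top (by omega), ih, sum_Icc_succ_top (by omega), add_assoc]

lemma word_replicate_succ (p : ℕ+) (i : ℕ) :
    word (List.replicate (i + 1) p) = z p * word (List.replicate i p) := by
  rw [List.replicate_succ, word_cons]

lemma st_replicate_cons (p l : ℕ+) (m n : ℕ) :
    st (List.replicate m p) (l :: List.replicate n p) =
      (∑ i ∈ Icc 1 m,
        (word (List.replicate i p) * z l + word (List.replicate (i - 1) p) * z (p + l))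
          * st (List.replicate (m - i) p) (List.replicate n p))
      + z l * st (List.replicate m p) (List.replicate n p) := by
  induction m with
  | zero =>
    rw [Icc_eq_empty_of_lt zero_lt_one, sum_empty, zero_add, List.replicate_zero, st_nil_left,
      st_nil_left, word_cons]
  | succ m ih =>
    have shift : ∀ i ∈ Icc 1 m,
        (word (List.replicate (i + 1) p) * z l + word (List.replicate (i + 1 - 1) p) * z (p + l))
          * st (List.replicate (m + 1 - (i + 1)) p) (List.replicate n p)
        = z p * ((word (List.replicate i p) * z l + word (List.replicate (i - 1) p) * z (p + l))
          * st (List.replicate (m - i) p) (List.replicate n p)) := by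
      intro i hi
      obtain ⟨j, rfl⟩ : ∃ j, i = j + 1 := ⟨i - 1, by grind⟩
      simp only [Nat.add_sub_cancel, Nat.add_sub_add_right, word_replicate_succ]
      noncomm_ring
    rw [List.replicate_succ, st_cons_cons, ih, ← List.replicate_succ, sum_Icc_one_succ,
      sum_congr rfl shift, ← mul_sum]
    simp only [Nat.add_sub_cancel, Nat.sub_self, word_replicate_succ, List.replicate_zero, word_nil]
    noncomm_ring

lemma st_cons_replicate (p k : ℕ+) (m n : ℕ) :
    st (k :: List.replicate m p) (List.replicate n p) =
      (∑ i ∈ Icc 1 n,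
        (word (List.replicate i p) * z k + word (List.replicate (i - 1) p) * z (p + k))
          * st (List.replicate (n - i) p) (List.replicate m p))
      + z k * st (List.replicate m p) (List.replicate n p) := by
  rw [st_comm, st_replicate_cons, st_comm (List.replicate n p)]

theorem st_one_one (k l p : ℕ+) (m n : ℕ) :
    st (k :: List.replicate m p) (l :: List.replicate n p) =
      (∑ i ∈ Finset.Icc 1 m,
        z k * (word (List.replicate i p) * z l + word (List.replicate (i - 1) p) * z (p + l))
          * st (List.replicate (m - i) p) (List.replicate n p))
      + (∑ i ∈ Finset.Icc 1 n,
        z l * (word (List.replicate i p) * z k + word (List.replicate (i - 1) p) * z (p + k))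
          * st (List.replicate (n - i) p) (List.replicate m p))
      + (z k * z l + z l * z k + z (k + l)) * st (List.replicate m p) (List.replicate n p) := by
  rw [st_cons_cons, st_replicate_cons, st_cons_replicate, mul_add, mul_add, mul_sum, mul_sum]
  noncomm_ring
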